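/- Let β ≥ e and define the Cox occupation probabilities p_η(n) = g^{(n)}(−1)/n!, where g(ζ) = exp(β(e^ζ − 1)). Then for every n ≥ 1, p_η(n) ≥ a·b·B_n/n!, where a = exp(−β(1 − e^{−1})), b = β e^{−1} ≥ 1, and B_n is the n-th Bell number (the number of partitions of an n-element set). -/

import Mathlib

/-- The n-th Bell number B_n: the number of partitions of an n-element set. -/
noncomputable def bellNumber (n : ℕ) : ℕ := Nat.card (Finpartition (Finset.univ : Finset (Fin n)))

/-!
Since `g' = β eᶻ g`, Leibniz's rule gives `g⁽ⁿ⁺¹⁾ = β eᶻ ∑ₖ C(n,k) g⁽ⁿ⁻ᵏ⁾`, which is the Bell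
recursion `B (n+1) = ∑ₖ C(n,k) B (n-k)` up to the factor `β eᶻ`. Where `β eᶻ ≥ 1`, induction gives
`g⁽ⁿ⁾ ≥ B n · g`, and one more application of the recursion yields `g⁽ⁿ⁾ ≥ β eᶻ · B n · g` for
`n ≥ 1`; at `z = -1` this is the claim, as `g (-1) = a` and `β e⁻¹ = b`. The Bell recursion for
partition counts comes from splitting off the block of a new point: a partition of `Option α` is
a subset `S ⊆ α` (the points outside the block of `none`) together with a partition of `S`.
-/

open Finset Real

instance Setoid.instFinite {α : Type*} [Finite α] : Finite (Setoid α) :=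
  Finite.of_injective (fun s : Setoid α => s.r) fun _ _ => Setoid.eq_iff_rel_eq.mpr

def Equiv.setoidCongr {α β : Type*} (e : α ≃ β) : Setoid α ≃ Setoid β where
  toFun s := s.comap e.symm
  invFun s := s.comap e
  left_inv s := Setoid.ext fun a b => by simp [Setoid.comap_rel]
  right_inv s := Setoid.ext fun a b => by simp [Setoid.comap_rel]

namespace Finpartition

variable {α : Type*} [DecidableEq α] {s : Finset α}

lemma parts_eq_image_part (P : Finpartition s) : P.parts = s.image P.part := by
  ext t
  refine ⟨fun ht => ?_, fun ht => ?_⟩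
  · obtain ⟨a, ha, rfl⟩ := P.part_surjOn ht
    exact mem_image_of_mem _ ha
  · obtain ⟨a, ha, rfl⟩ := mem_image.mp ht
    exact P.part_mem.mpr ha

variable [Fintype α]

noncomputable def equivSetoid : Finpartition (univ : Finset α) ≃ Setoid α where
  toFun P := Setoid.ker P.part
  invFun r := @ofSetoid α _ _ r (Classical.decRel _)
  left_inv P := by
    classical
    refine Finpartition.ext ?_
    rw [parts_eq_image_part, parts_eq_image_part]
    congr 1
    funext a
    ext b
    rw [mem_part_ofSetoid_iff_rel, Setoid.ker_def, eq_comm,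
      P.mem_part_iff_part_eq_part (mem_univ _) (mem_univ _)]
  right_inv r := by
    classical
    refine Setoid.ext fun a b => ?_
    rw [Setoid.ker_def, ← mem_part_ofSetoid_iff_rel, eq_comm,
      mem_part_iff_part_eq_part _ (mem_univ _) (mem_univ _)]

end Finpartition

namespace Setoid

variable {α : Type*}

lemma rel_iff_of_rel_right (r : Setoid α) {x y z : α} (h : r y z) : r x y ↔ r x z :=
  ⟨fun h' => r.trans' h' h, fun h' => r.trans' h' (r.symm' h)⟩

lemma ext_option {s t : Setoid (Option α)} (hnone : ∀ a, s (some a) none ↔ t (some a) none)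
    (hsome : ∀ a b, ¬ s (some a) none → ¬ s (some b) none →
      (s (some a) (some b) ↔ t (some a) (some b))) : s = t := by
  refine Setoid.ext ?_
  rintro (_ | a) (_ | b)
  · exact iff_of_true (s.refl' _) (t.refl' _)
  · exact (s.comm').trans ((hnone b).trans (t.comm'))
  · exact hnone a
  · by_cases ha : s (some a) none
    · rw [s.comm', t.comm', s.rel_iff_of_rel_right ha, t.rel_iff_of_rel_right ((hnone a).mp ha),
        hnone]
    by_cases hb : s (some b) none
    · rw [s.rel_iff_of_rel_right hb, t.rel_iff_of_rel_right ((hnone b).mp hb), hnone]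
    exact hsome a b ha hb

variable [DecidableEq α]

def extendByNone (S : Finset α) (r : Setoid S) : Setoid (Option α) :=
  ker fun x => x.bind fun a => if h : a ∈ S then some (Quotient.mk r ⟨a, h⟩) else none

variable {S : Finset α} {r : Setoid S}

lemma extendByNone_some_none {a : α} : extendByNone S r (some a) none ↔ a ∉ S := by
  rw [extendByNone, ker_def]
  by_cases ha : a ∈ S <;> simp [ha]

lemma extendByNone_some_some {a b : α} (ha : a ∈ S) (hb : b ∈ S) :
    extendByNone S r (some a) (some b) ↔ r ⟨a, ha⟩ ⟨b, hb⟩ := by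
  rw [extendByNone, ker_def]
  simp [ha, hb, Quotient.eq]

variable [Fintype α]

open scoped Classical in
noncomputable def someSupport (s : Setoid (Option α)) : Finset α := {a | ¬ s (some a) none}

omit [DecidableEq α] in
lemma mem_someSupport {s : Setoid (Option α)} {a : α} :
    a ∈ someSupport s ↔ ¬ s (some a) none := by
  simp [someSupport]

lemma someSupport_extendByNone : someSupport (extendByNone S r) = S := by
  ext a; rw [mem_someSupport, extendByNone_some_none, not_not]

noncomputable def someSupportFiberEquiv (S : Finset α) :
    {s : Setoid (Option α) // someSupport s = S} ≃ Setoid S where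
  toFun s := s.1.comap fun a => some a.1
  invFun r := ⟨extendByNone S r, someSupport_extendByNone⟩
  left_inv := by
    rintro ⟨s, rfl⟩
    refine Subtype.ext (?_ : extendByNone _ (s.comap fun a : someSupport s => some a.1) = s)
    refine ext_option (fun a => ?_) fun a b ha hb => ?_
    · rw [extendByNone_some_none, mem_someSupport, not_not]
    · simp only [← mem_someSupport, someSupport_extendByNone] at ha hb
      rw [extendByNone_some_some ha hb, comap_rel]
  right_inv r := Setoid.ext fun ⟨a, ha⟩ ⟨b, hb⟩ => by
    rw [comap_rel, extendByNone_some_some ha hb]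

lemma card_option :
    Nat.card (Setoid (Option α)) = ∑ S : Finset α, Nat.card (Setoid S) := by
  rw [Nat.card_congr (Equiv.sigmaFiberEquiv someSupport).symm, Nat.card_sigma]
  exact sum_congr rfl fun S _ => Nat.card_congr (someSupportFiberEquiv S)

end Setoid

lemma Nat.bell_succ_eq_sum_choose_mul_bell (n : ℕ) :
    (n + 1).bell = ∑ k ∈ range (n + 1), n.choose k * k.bell := by
  rw [Nat.bell_succ, ← Nat.range_succ_eq_Iic, ← sum_range_reflect]
  refine sum_congr rfl fun k hk => ?_
  have hkn : k ≤ n := Nat.lt_succ_iff.mp (mem_range.mp hk)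
  rw [Nat.add_sub_cancel, Nat.sub_sub_self hkn, Nat.choose_symm hkn]

lemma Setoid.card_fin_eq_bell (n : ℕ) : Nat.card (Setoid (Fin n)) = n.bell := by
  induction n using Nat.strong_induction_on with
  | _ n ih =>
    cases n with
    | zero =>
      have : Subsingleton (Setoid (Fin 0)) := ⟨fun _ _ => Setoid.ext fun a => a.elim0⟩
      simp
    | succ n =>
      have hS (S : Finset (Fin n)) : Nat.card (Setoid S) = (#S).bell := by
        rw [Nat.card_congr S.equivFin.setoidCongr,
          ih _ (Nat.lt_succ_of_le (card_le_univ S |>.trans_eq (Fintype.card_fin n)))]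
      rw [Nat.card_congr (finSuccEquiv n).setoidCongr, Setoid.card_option]
      simp_rw [hS]
      rw [← powerset_univ, sum_powerset_apply_card, card_univ, Fintype.card_fin,
        Nat.bell_succ_eq_sum_choose_mul_bell]
      simp only [smul_eq_mul]

theorem Setoid.card_eq_bell (α : Type*) [Finite α] : Nat.card (Setoid α) = (Nat.card α).bell :=
  (Nat.card_congr (Finite.equivFin α).setoidCongr).trans (card_fin_eq_bell _)

theorem bellNumber_eq_bell (n : ℕ) : bellNumber n = n.bell := by
  rw [bellNumber, Nat.card_congr Finpartition.equivSetoid, Setoid.card_eq_bell, Nat.card_fin]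

noncomputable def poissonMGF (β z : ℝ) : ℝ := exp (β * (exp z - 1))

section poissonMGF

variable (β : ℝ)

lemma contDiff_poissonMGF : ContDiff ℝ ⊤ (poissonMGF β) := by
  unfold poissonMGF; fun_prop

lemma deriv_poissonMGF : deriv (poissonMGF β) = fun z => β * exp z * poissonMGF β z := by
  funext z
  unfold poissonMGF
  have h := ((hasDerivAt_exp z).sub_const 1).const_mul β |>.exp
  simpa [mul_comm] using h.deriv

lemma iteratedDeriv_succ_poissonMGF (n : ℕ) (z : ℝ) :
    iteratedDeriv (n + 1) (poissonMGF β) z =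
      β * exp z * ∑ i ∈ range (n + 1), n.choose i * iteratedDeriv (n - i) (poissonMGF β) z := by
  have hexp (i : ℕ) : iteratedDeriv i (fun z => β * exp z) z = β * exp z := by
    rw [iteratedDeriv_const_mul_field, iteratedDeriv_eq_iterate, iter_deriv_exp]
  rw [iteratedDeriv_succ', deriv_poissonMGF, show (fun z => β * exp z * poissonMGF β z) =
    (fun z => β * exp z) * poissonMGF β from rfl,
    iteratedDeriv_mul (by fun_prop) ((contDiff_poissonMGF β).contDiffAt.of_le le_top), mul_sum]
  simp_rw [hexp]
  exact sum_congr rfl fun i _ => by ring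

variable {β} {z : ℝ}

lemma mul_bell_mul_poissonMGF_le_iteratedDeriv_succ (hβz : 0 ≤ β * exp z) (n : ℕ)
    (ih : ∀ k ≤ n, (k.bell : ℝ) * poissonMGF β z ≤ iteratedDeriv k (poissonMGF β) z) :
    β * exp z * ((n + 1).bell * poissonMGF β z) ≤ iteratedDeriv (n + 1) (poissonMGF β) z := by
  rw [iteratedDeriv_succ_poissonMGF, Nat.bell_succ, ← Nat.range_succ_eq_Iic]
  push_cast
  rw [sum_mul]
  refine mul_le_mul_of_nonneg_left (sum_le_sum fun i _ => ?_) hβz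
  rw [mul_assoc]
  exact mul_le_mul_of_nonneg_left (ih _ (Nat.sub_le n i)) (Nat.cast_nonneg _)

lemma bell_mul_poissonMGF_le_iteratedDeriv (hβz : 1 ≤ β * exp z) (n : ℕ) :
    (n.bell : ℝ) * poissonMGF β z ≤ iteratedDeriv n (poissonMGF β) z := by
  induction n using Nat.strong_induction_on with
  | _ n ih =>
    cases n with
    | zero => simp
    | succ n =>
      refine le_trans (le_mul_of_one_le_left ?_ hβz) <|
        mul_bell_mul_poissonMGF_le_iteratedDeriv_succ (by linarith) n fun k hk => ih k (by omega)
      exact mul_nonneg (Nat.cast_nonneg _) (exp_pos _).le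

end poissonMGF

theorem stmt_11 (β : ℝ) (hβ : Real.exp 1 ≤ β) :
    β * Real.exp (-1) ≥ 1 ∧
    ∀ n : ℕ, 1 ≤ n →
      iteratedDeriv n (fun z : ℝ => Real.exp (β * (Real.exp z - 1))) (-1) / n.factorial
        ≥ Real.exp (-β * (1 - Real.exp (-1))) * (β * Real.exp (-1)) * (bellNumber n : ℝ)
            / n.factorial := by
  have hb : 1 ≤ β * exp (-1) :=
    calc 1 = exp 1 * exp (-1) := by rw [← exp_add, add_neg_cancel, exp_zero]
      _ ≤ β * exp (-1) := by gcongr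
  refine ⟨hb, fun n hn => ?_⟩
  obtain ⟨m, rfl⟩ := Nat.exists_eq_add_of_le' hn
  have hbound := mul_bell_mul_poissonMGF_le_iteratedDeriv_succ (by linarith) m
    fun k _ => bell_mul_poissonMGF_le_iteratedDeriv hb k
  have ha : exp (-β * (1 - exp (-1))) = poissonMGF β (-1) := by
    rw [poissonMGF]; ring_nf
  rw [ge_iff_le, bellNumber_eq_bell, ha]
  gcongr
  exact (le_of_eq (by ring)).trans hbound
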